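/- The composed linear order ≺ = ≺₂ ∘ ≺₁ on E(G₂ ∘ G₁) satisfies the nesting condition (Q₂). -/

import Mathlib

/-- A progressive graph: a directed (multi)graph with sources `s`, targets `t`, and
a distinguished boundary set `σ` of vertices. -/
structure PGraph where
  V : Type
  E : Type
  s : E → V
  t : E → V
  σ : Set V

namespace PGraph

variable (G : PGraph)

/-- One edge can be followed by another. -/
def step (e f : G.E) : Prop := G.t e = G.s f

/-- The reachable order: a directed path starts with `e₁` and ends with `e₂`. -/
def reach : G.E → G.E → Prop := Relation.ReflTransGen G.step

/-- No directed cycles. -/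
def Acyclic : Prop := ∀ e, ¬ Relation.TransGen G.step e e

/-- Incoming edges of a vertex. -/
def I (v : G.V) : Set G.E := {e | G.t e = v}

/-- Outgoing edges of a vertex. -/
def O (v : G.V) : Set G.E := {e | G.s e = v}

/-- An input edge: it starts at a boundary vertex. -/
def InputEdge (e : G.E) : Prop := G.s e ∈ G.σ

/-- An output edge: it ends at a boundary vertex. -/
def OutputEdge (e : G.E) : Prop := G.t e ∈ G.σ

/-- An inner vertex. -/
def Inner (v : G.V) : Prop := v ∉ G.σ

/-- An input vertex: a boundary vertex which is a source. -/
def InputVertex (v : G.V) : Prop := v ∈ G.σ ∧ ∃ e, G.s e = v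

/-- An output vertex: a boundary vertex which is a sink. -/
def OutputVertex (v : G.V) : Prop := v ∈ G.σ ∧ ∃ e, G.t e = v

/-- The boundary consists of leaves: every boundary vertex has exactly one
incident edge-end. -/
def Progressive : Prop := ∀ v ∈ G.σ, ∃! e : G.E, G.s e = v ∨ G.t e = v

/-- The reflexive closure of a strict order on edges. -/
def le (lt : G.E → G.E → Prop) (a b : G.E) : Prop := lt a b ∨ a = b

/-- The convex hull of a set of edges with respect to a linear order `lt`. -/
def conv (lt : G.E → G.E → Prop) (X : Set G.E) : Set G.E :=
  {y | ∃ a ∈ X, ∃ b ∈ X, G.le lt a y ∧ G.le lt y b}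

/-- (Q₁): the reachable order implies the linear order. -/
def Q1 (lt : G.E → G.E → Prop) : Prop :=
  ∀ e₁ e₂, G.reach e₁ e₂ → G.le lt e₁ e₂

/-- (Q₂), the nesting condition. -/
def Q2 (lt : G.E → G.E → Prop) : Prop :=
  ∀ e₁ e e₂ : G.E, lt e₁ e → lt e e₂ →
    (G.t e₁ = G.t e₂ → G.I (G.t e) ⊆ G.conv lt (G.I (G.t e₁))) ∧
    (G.s e₁ = G.s e₂ → G.O (G.s e) ⊆ G.conv lt (G.O (G.s e₁))) ∧
    (G.t e₁ = G.s e₂ →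
      G.I (G.t e) ⊆ G.conv lt (G.I (G.t e₁)) ∨ G.O (G.s e) ⊆ G.conv lt (G.O (G.s e₂)))

/-- An upward planar order: a linear (strict total) order on edges satisfying
(Q₁) and the nesting condition (Q₂). -/
def UPO (lt : G.E → G.E → Prop) : Prop :=
  IsStrictTotalOrder G.E lt ∧ G.Q1 lt ∧ G.Q2 lt

/-- Admissibility: for every inner vertex `v`, input edges avoid `conv (O v)` and
output edges avoid `conv (I v)`. -/
def Admissible (lt : G.E → G.E → Prop) : Prop :=
  ∀ v : G.V, G.Inner v →
    (∀ e, G.InputEdge e → e ∉ G.conv lt (G.O v)) ∧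
    (∀ e, G.OutputEdge e → e ∉ G.conv lt (G.I v))

end PGraph

/-- Data exhibiting `G` as the composite `G₂ ∘ G₁` of two progressive graphs:
the edges of `G₁` and `G₂` embed into those of `G` via `j₁`, `j₂`, overlapping
exactly on the output edges of `G₁`, identified with the input edges of `G₂`;
the removed boundary vertices are the output vertices of `G₁` and the input
vertices of `G₂`, and the boundary of `G` is the union of the input vertices of
`G₁` and the output vertices of `G₂`. -/
structure CompData (G₁ G₂ G : PGraph) where
  j₁ : G₁.E → G.E
  j₂ : G₂.E → G.E
  k₁ : G₁.V → G.V
  k₂ : G₂.V → G.V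
  inj₁ : Function.Injective j₁
  inj₂ : Function.Injective j₂
  coverE : ∀ e : G.E, (∃ a, j₁ a = e) ∨ (∃ b, j₂ b = e)
  glue : ∀ a b, j₁ a = j₂ b → G₁.OutputEdge a ∧ G₂.InputEdge b
  glueOut : ∀ a, G₁.OutputEdge a → ∃ b, G₂.InputEdge b ∧ j₁ a = j₂ b
  glueIn : ∀ b, G₂.InputEdge b → ∃ a, G₁.OutputEdge a ∧ j₁ a = j₂ b
  src₁ : ∀ a, G.s (j₁ a) = k₁ (G₁.s a)
  tgt₁ : ∀ a, ¬ G₁.OutputEdge a → G.t (j₁ a) = k₁ (G₁.t a)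
  tgt₂ : ∀ b, G.t (j₂ b) = k₂ (G₂.t b)
  src₂ : ∀ b, ¬ G₂.InputEdge b → G.s (j₂ b) = k₂ (G₂.s b)
  injV₁ : ∀ v w, ¬ G₁.OutputVertex v → ¬ G₁.OutputVertex w → k₁ v = k₁ w → v = w
  injV₂ : ∀ v w, ¬ G₂.InputVertex v → ¬ G₂.InputVertex w → k₂ v = k₂ w → v = w
  disjV : ∀ v w, ¬ G₁.OutputVertex v → ¬ G₂.InputVertex w → k₁ v ≠ k₂ w
  coverV : ∀ u : G.V,
    (∃ v, ¬ G₁.OutputVertex v ∧ k₁ v = u) ∨ (∃ w, ¬ G₂.InputVertex w ∧ k₂ w = u)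
  bdry : ∀ u : G.V,
    u ∈ G.σ ↔ (∃ v, G₁.InputVertex v ∧ k₁ v = u) ∨ (∃ w, G₂.OutputVertex w ∧ k₂ w = u)

/-- `lt` is the shuffle-style composed linear order `lt₂ ∘ lt₁` on the edges of the
composite: it restricts to `lt₁` on `E(G₁)` and to `lt₂` on `E(G₂)`, and an
unidentified edge of `G₁` precedes an unidentified edge of `G₂` iff some identified
edge `ē = j₁ o = j₂ i` lies weakly between them. -/
def IsCompOrder {G₁ G₂ G : PGraph} (C : CompData G₁ G₂ G)
    (lt₁ : G₁.E → G₁.E → Prop) (lt₂ : G₂.E → G₂.E → Prop)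
    (lt : G.E → G.E → Prop) : Prop :=
  (∀ a a', lt₁ a a' ↔ lt (C.j₁ a) (C.j₁ a')) ∧
  (∀ b b', lt₂ b b' ↔ lt (C.j₂ b) (C.j₂ b')) ∧
  (∀ a b, (∀ b', C.j₁ a ≠ C.j₂ b') → (∀ a', C.j₂ b ≠ C.j₁ a') →
    (lt (C.j₁ a) (C.j₂ b) ↔
      ∃ o i, C.j₁ o = C.j₂ i ∧ G₁.le lt₁ a o ∧ G₂.le lt₂ i b))

section Aux

namespace PGraph

variable {G : PGraph}

lemma not_both (hP : G.Progressive) (hA : G.Acyclic) {v : G.V} (hv : v ∈ G.σ)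
    {e f : G.E} (he : G.s e = v) (hf : G.t f = v) : False := by
  obtain ⟨g, -, hg⟩ := hP v hv
  have h1 : e = g := hg e (Or.inl he)
  have h2 : f = g := hg f (Or.inr hf)
  refine hA e (Relation.TransGen.single (show G.t e = G.s e from ?_))
  rw [h1, ← h2, hf, ← he, h1, h2]

lemma uniq_t (hP : G.Progressive) {v : G.V} (hv : v ∈ G.σ)
    {e f : G.E} (he : G.t e = v) (hf : G.t f = v) : e = f := by
  obtain ⟨g, -, hg⟩ := hP v hv
  exact (hg e (Or.inr he)).trans (hg f (Or.inr hf)).symm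

lemma uniq_s (hP : G.Progressive) {v : G.V} (hv : v ∈ G.σ)
    {e f : G.E} (he : G.s e = v) (hf : G.s f = v) : e = f := by
  obtain ⟨g, -, hg⟩ := hP v hv
  exact (hg e (Or.inl he)).trans (hg f (Or.inl hf)).symm

/-- the image of a convex hull under an order embedding is inside the convex hull
of the image. -/
lemma conv_image {G' : PGraph} {lt' : G'.E → G'.E → Prop} {lt : G.E → G.E → Prop}
    {j : G'.E → G.E} (hj : ∀ a a', lt' a a' ↔ lt (j a) (j a')) (X : Set G'.E) :
    j '' (G'.conv lt' X) ⊆ G.conv lt (j '' X) := by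
  rintro - ⟨x, ⟨a, ha, b, hb, hax, hxb⟩, rfl⟩
  refine ⟨j a, ⟨a, ha, rfl⟩, j b, ⟨b, hb, rfl⟩, ?_, ?_⟩
  · rcases hax with h | rfl
    · exact Or.inl ((hj _ _).1 h)
    · exact Or.inr rfl
  · rcases hxb with h | rfl
    · exact Or.inl ((hj _ _).1 h)
    · exact Or.inr rfl

/-- Nesting lemma for targets: no output edge can lie strictly between two edges
with the same target. -/
lemma nestI {lt₁ : G.E → G.E → Prop} (hP : G.Progressive) (hU : G.UPO lt₁)
    (hAd : G.Admissible lt₁) {x o y : G.E} (h1 : lt₁ x o) (h2 : lt₁ o y)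
    (ht : G.t x = G.t y) (ho : G.OutputEdge o) : False := by
  by_cases hσ : G.t x ∈ G.σ
  · have hxy : x = y := uniq_t hP hσ rfl ht.symm
    subst hxy
    exact hU.1.toIrrefl.irrefl x (hU.1.toIsTrans.trans x o x h1 h2)
  · have hsub := (hU.2.2 x o y h1 h2).1 ht
    exact (hAd (G.t x) hσ).2 o ho (hsub (show G.t o = G.t o from rfl))

/-- Nesting lemma for sources: no input edge can lie strictly between two edges
with the same source. -/
lemma nestO {lt₁ : G.E → G.E → Prop} (hP : G.Progressive) (hU : G.UPO lt₁)
    (hAd : G.Admissible lt₁) {x i y : G.E} (h1 : lt₁ x i) (h2 : lt₁ i y)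
    (hs : G.s x = G.s y) (hi : G.InputEdge i) : False := by
  by_cases hσ : G.s x ∈ G.σ
  · have hxy : x = y := uniq_s hP hσ rfl hs.symm
    subst hxy
    exact hU.1.toIrrefl.irrefl x (hU.1.toIsTrans.trans x i x h1 h2)
  · have hsub := (hU.2.2 x i y h1 h2).2.1 hs
    exact (hAd (G.s x) hσ).1 i hi (hsub (show G.s i = G.s i from rfl))

lemma tgt_not_input (hP : G.Progressive) (hA : G.Acyclic) (b : G.E) :
    ¬ G.InputVertex (G.t b) := by
  rintro ⟨hσ, f, hf⟩
  exact PGraph.not_both hP hA hσ hf rfl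

lemma src_not_output (hP : G.Progressive) (hA : G.Acyclic) (a : G.E) :
    ¬ G.OutputVertex (G.s a) := by
  rintro ⟨hσ, f, hf⟩
  exact PGraph.not_both hP hA hσ rfl hf

lemma out_congr {x y : G.E} (h : G.t x = G.t y) (hx : G.OutputEdge x) :
    G.OutputEdge y := by
  show G.t y ∈ G.σ
  rw [← h]
  exact hx

lemma in_congr {x y : G.E} (h : G.s x = G.s y) (hx : G.InputEdge x) :
    G.InputEdge y := by
  show G.s y ∈ G.σ
  rw [← h]
  exact hx

end PGraph

namespace CompData

variable {G₁ G₂ G : PGraph} (C : CompData G₁ G₂ G)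

lemma cases₁ (e : G.E) : (∃ b, C.j₂ b = e) ∨ (∃ a, ¬ G₁.OutputEdge a ∧ C.j₁ a = e) := by
  rcases C.coverE e with ⟨a, rfl⟩ | ⟨b, rfl⟩
  · by_cases ha : G₁.OutputEdge a
    · obtain ⟨b, -, hb⟩ := C.glueOut a ha
      exact Or.inl ⟨b, hb.symm⟩
    · exact Or.inr ⟨a, ha, rfl⟩
  · exact Or.inl ⟨b, rfl⟩

lemma cases₂ (e : G.E) : (∃ a, C.j₁ a = e) ∨ (∃ b, ¬ G₂.InputEdge b ∧ C.j₂ b = e) := by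
  rcases C.coverE e with ⟨a, rfl⟩ | ⟨b, rfl⟩
  · exact Or.inl ⟨a, rfl⟩
  · by_cases hb : G₂.InputEdge b
    · obtain ⟨a, -, ha⟩ := C.glueIn b hb
      exact Or.inl ⟨a, ha⟩
    · exact Or.inr ⟨b, hb, rfl⟩

lemma ne₁₂ {a : G₁.E} (ha : ¬ G₁.OutputEdge a) (b : G₂.E) : C.j₁ a ≠ C.j₂ b :=
  fun h => ha (C.glue a b h).1

lemma ne₂₁ {b : G₂.E} (hb : ¬ G₂.InputEdge b) (a : G₁.E) : C.j₂ b ≠ C.j₁ a :=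
  fun h => hb (C.glue a b h.symm).2


lemma I_k₁ (hP₂ : G₂.Progressive) (hA₂ : G₂.Acyclic)
    {v : G₁.V} (hv : ¬ G₁.OutputVertex v) : G.I (C.k₁ v) = C.j₁ '' G₁.I v := by
  ext e
  constructor
  · intro (he : G.t e = C.k₁ v)
    rcases C.cases₁ e with ⟨b, rfl⟩ | ⟨a, ha, rfl⟩
    · rw [C.tgt₂ b] at he
      exact absurd he.symm (C.disjV v _ hv (PGraph.tgt_not_input hP₂ hA₂ b))
    · rw [C.tgt₁ a ha] at he
      have hta : ¬ G₁.OutputVertex (G₁.t a) := fun h => ha h.1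
      exact ⟨a, C.injV₁ _ _ hta hv he, rfl⟩
  · rintro ⟨a, (ha : G₁.t a = v), rfl⟩
    have hout : ¬ G₁.OutputEdge a := fun h => hv ⟨ha ▸ h, a, ha⟩
    show G.t (C.j₁ a) = C.k₁ v
    rw [C.tgt₁ a hout, ha]

lemma O_k₁ (hP₁ : G₁.Progressive) (hA₁ : G₁.Acyclic)
    {v : G₁.V} (hv : ¬ G₁.OutputVertex v) : G.O (C.k₁ v) = C.j₁ '' G₁.O v := by
  ext e
  constructor
  · intro (he : G.s e = C.k₁ v)
    rcases C.cases₂ e with ⟨a, rfl⟩ | ⟨b, hb, rfl⟩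
    · rw [C.src₁ a] at he
      exact ⟨a, C.injV₁ _ _ (PGraph.src_not_output hP₁ hA₁ a) hv he, rfl⟩
    · rw [C.src₂ b hb] at he
      have : ¬ G₂.InputVertex (G₂.s b) := fun h => hb h.1
      exact absurd he.symm (C.disjV v _ hv this)
  · rintro ⟨a, (ha : G₁.s a = v), rfl⟩
    show G.s (C.j₁ a) = C.k₁ v
    rw [C.src₁ a, ha]

lemma I_k₂ (hP₂ : G₂.Progressive) (hA₂ : G₂.Acyclic)
    {w : G₂.V} (hw : ¬ G₂.InputVertex w) : G.I (C.k₂ w) = C.j₂ '' G₂.I w := by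
  ext e
  constructor
  · intro (he : G.t e = C.k₂ w)
    rcases C.cases₁ e with ⟨b, rfl⟩ | ⟨a, ha, rfl⟩
    · rw [C.tgt₂ b] at he
      exact ⟨b, C.injV₂ _ _ (PGraph.tgt_not_input hP₂ hA₂ b) hw he, rfl⟩
    · rw [C.tgt₁ a ha] at he
      have hta : ¬ G₁.OutputVertex (G₁.t a) := fun h => ha h.1
      exact absurd he (C.disjV _ w hta hw)
  · rintro ⟨b, (hb : G₂.t b = w), rfl⟩
    show G.t (C.j₂ b) = C.k₂ w
    rw [C.tgt₂ b, hb]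

lemma O_k₂ (hP₁ : G₁.Progressive) (hA₁ : G₁.Acyclic)
    {w : G₂.V} (hw : ¬ G₂.InputVertex w) : G.O (C.k₂ w) = C.j₂ '' G₂.O w := by
  ext e
  constructor
  · intro (he : G.s e = C.k₂ w)
    rcases C.cases₂ e with ⟨a, rfl⟩ | ⟨b, hb, rfl⟩
    · rw [C.src₁ a] at he
      exact absurd he (C.disjV _ w (PGraph.src_not_output hP₁ hA₁ a) hw)
    · rw [C.src₂ b hb] at he
      exact ⟨b, C.injV₂ _ _ (fun h => hb h.1) hw he, rfl⟩
  · rintro ⟨b, (hb : G₂.s b = w), rfl⟩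
    have hin : ¬ G₂.InputEdge b := fun h => hw ⟨hb ▸ h, b, hb⟩
    show G.s (C.j₂ b) = C.k₂ w
    rw [C.src₂ b hin, hb]

end CompData

end Aux

/-- The composed linear order satisfies the nesting condition (Q₂). -/
theorem comp_Q2 (G₁ G₂ G : PGraph)
    [Fintype G₁.E] [Fintype G₂.E] [Fintype G.E]
    (lt₁ : G₁.E → G₁.E → Prop) (lt₂ : G₂.E → G₂.E → Prop) (lt : G.E → G.E → Prop)
    (hP₁ : G₁.Progressive) (hA₁ : G₁.Acyclic) (hU₁ : G₁.UPO lt₁) (hAd₁ : G₁.Admissible lt₁)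
    (hP₂ : G₂.Progressive) (hA₂ : G₂.Acyclic) (hU₂ : G₂.UPO lt₂) (hAd₂ : G₂.Admissible lt₂)
    (C : CompData G₁ G₂ G) (hst : IsStrictTotalOrder G.E lt)
    (hC : IsCompOrder C lt₁ lt₂ lt) :
    G.Q2 lt := by
  obtain ⟨hc1, hc2, hc3⟩ := hC
  have tri : ∀ x y : G.E, lt x y ∨ x = y ∨ lt y x := by haveI := hst; exact trichotomous
  have trn : ∀ {x y z : G.E}, lt x y → lt y z → lt x z :=
    fun h h' => hst.toIsTrans.trans _ _ _ h h'
  have irr : ∀ x : G.E, ¬ lt x x := hst.toIrrefl.irrefl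
  have asym : ∀ {x y : G.E}, lt x y → ¬ lt y x := fun h h' => irr _ (trn h h')
  have tri₁ : ∀ x y : G₁.E, lt₁ x y ∨ x = y ∨ lt₁ y x := by haveI := hU₁.1; exact trichotomous
  have trn₁ : ∀ {x y z : G₁.E}, lt₁ x y → lt₁ y z → lt₁ x z :=
    fun h h' => hU₁.1.toIsTrans.trans _ _ _ h h'
  have tri₂ : ∀ x y : G₂.E, lt₂ x y ∨ x = y ∨ lt₂ y x := by haveI := hU₂.1; exact trichotomous
  have hQ2₁ := hU₁.2.2
  have hQ2₂ := hU₂.2.2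
  have cross : ∀ {a b}, ¬ G₁.OutputEdge a → ¬ G₂.InputEdge b →
      (lt (C.j₁ a) (C.j₂ b) ↔
        ∃ o i, C.j₁ o = C.j₂ i ∧ G₁.le lt₁ a o ∧ G₂.le lt₂ i b) :=
    fun ha hb => hc3 _ _ (C.ne₁₂ ha) (C.ne₂₁ hb)
  have crossR : ∀ {a b}, ¬ G₁.OutputEdge a → ¬ G₂.InputEdge b → lt (C.j₂ b) (C.j₁ a) →
      ¬ ∃ o i, C.j₁ o = C.j₂ i ∧ G₁.le lt₁ a o ∧ G₂.le lt₂ i b :=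
    fun ha hb h h' => asym h ((cross ha hb).2 h')
  intro e₁ e e₂ h1 h2
  refine ⟨?_, ?_, ?_⟩
  -- PART I : targets
  · intro htt
    have hm₁ : e₁ ∈ G.I (G.t e₁) := rfl
    have hm₂ : e₂ ∈ G.I (G.t e₁) := htt.symm
    rcases C.coverV (G.t e₁) with ⟨v, hv, hkv⟩ | ⟨w, hw, hkw⟩
    · -- t e₁ = k₁ v
      rw [← hkv, C.I_k₁ hP₂ hA₂ hv] at hm₁ hm₂
      obtain ⟨a₁, ha₁, he₁⟩ := hm₁
      obtain ⟨a₂, ha₂, he₂⟩ := hm₂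
      have ha₁' : G₁.t a₁ = v := ha₁
      have ha₂' : G₁.t a₂ = v := ha₂
      have htt₁ : G₁.t a₁ = G₁.t a₂ := ha₁'.trans ha₂'.symm
      have hvσ : v ∉ G₁.σ := fun h => hv ⟨h, a₁, ha₁'⟩
      have hOa₁ : ¬ G₁.OutputEdge a₁ := fun h => hvσ (ha₁' ▸ h)
      have hOa₂ : ¬ G₁.OutputEdge a₂ := fun h => hvσ (ha₂' ▸ h)
      subst he₁; subst he₂
      rcases C.cases₁ e with ⟨b, hb⟩ | ⟨a, hOa, ha⟩
      · -- e in the range of j₂ : impossible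
        exfalso
        subst hb
        by_cases hIb : G₂.InputEdge b
        · obtain ⟨o, hOo, hoo⟩ := C.glueIn b hIb
          rw [← hoo] at h1 h2
          exact PGraph.nestI hP₁ hU₁ hAd₁ ((hc1 _ _).2 h1) ((hc1 _ _).2 h2) htt₁ hOo
        · obtain ⟨o, i, hg, hao, hib⟩ := (cross hOa₁ hIb).1 h1
          have hno := crossR hOa₂ hIb h2
          have hle : ¬ G₁.le lt₁ a₂ o := fun hle => hno ⟨o, i, hg, hle, hib⟩
          have hoa₂ : lt₁ o a₂ := by
            rcases tri₁ a₂ o with h | h | h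
            · exact absurd (Or.inl h) hle
            · exact absurd (Or.inr h) hle
            · exact h
          have ha₁o : lt₁ a₁ o := by
            rcases hao with h | rfl
            · exact h
            · exact absurd (C.glue _ _ hg).1 hOa₁
          exact PGraph.nestI hP₁ hU₁ hAd₁ ha₁o hoa₂ htt₁ (C.glue _ _ hg).1
      · -- e = j₁ a with a not an output edge : transport (Q₂) of G₁
        subst ha
        have hsub := (hQ2₁ a₁ a a₂ ((hc1 _ _).2 h1) ((hc1 _ _).2 h2)).1 htt₁
        rw [C.tgt₁ a hOa, C.I_k₁ hP₂ hA₂ (fun h => hOa h.1),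
          C.tgt₁ a₁ hOa₁, C.I_k₁ hP₂ hA₂ (fun h => hOa₁ h.1)]
        exact subset_trans (Set.image_mono hsub) (PGraph.conv_image hc1 _)
    · -- t e₁ = k₂ w
      rw [← hkw, C.I_k₂ hP₂ hA₂ hw] at hm₁ hm₂
      obtain ⟨b₁, hb₁, he₁⟩ := hm₁
      obtain ⟨b₂, hb₂, he₂⟩ := hm₂
      have hb₁' : G₂.t b₁ = w := hb₁
      have hb₂' : G₂.t b₂ = w := hb₂
      have htt₂ : G₂.t b₁ = G₂.t b₂ := hb₁'.trans hb₂'.symm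
      subst he₁; subst he₂
      rcases C.cases₁ e with ⟨b, hb⟩ | ⟨a, hOa, ha⟩
      · -- e in the range of j₂ : transport (Q₂) of G₂
        subst hb
        have hsub := (hQ2₂ b₁ b b₂ ((hc2 _ _).2 h1) ((hc2 _ _).2 h2)).1 htt₂
        rw [C.tgt₂ b, C.I_k₂ hP₂ hA₂ (PGraph.tgt_not_input hP₂ hA₂ b),
          C.tgt₂ b₁, C.I_k₂ hP₂ hA₂ (PGraph.tgt_not_input hP₂ hA₂ b₁)]
        exact subset_trans (Set.image_mono hsub) (PGraph.conv_image hc2 _)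
      · -- e = j₁ a pure : betweenness
        subst ha
        rw [C.tgt₁ a hOa, C.I_k₁ hP₂ hA₂ (fun h => hOa h.1),
          C.tgt₂ b₁, C.I_k₂ hP₂ hA₂ (PGraph.tgt_not_input hP₂ hA₂ b₁)]
        rintro - ⟨x, hx, rfl⟩
        have hx' : G₁.t x = G₁.t a := hx
        have hOx : ¬ G₁.OutputEdge x := fun h => hOa (PGraph.out_congr hx' h)
        have hlow : lt (C.j₂ b₁) (C.j₁ x) := by
          rcases tri (C.j₁ x) (C.j₂ b₁) with h | h | h
          · exfalso
            by_cases hIb₁ : G₂.InputEdge b₁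
            · obtain ⟨o₁, hOo₁, hg₁⟩ := C.glueIn b₁ hIb₁
              rw [← hg₁] at h h1
              exact PGraph.nestI hP₁ hU₁ hAd₁ ((hc1 _ _).2 h) ((hc1 _ _).2 h1) hx' hOo₁
            · obtain ⟨o, i, hg, hxo, hib⟩ := (cross hOx hIb₁).1 h
              have hno := crossR hOa hIb₁ h1
              have hle : ¬ G₁.le lt₁ a o := fun hle => hno ⟨o, i, hg, hle, hib⟩
              have hoa : lt₁ o a := by
                rcases tri₁ a o with h' | h' | h'
                · exact absurd (Or.inl h') hle
                · exact absurd (Or.inr h') hle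
                · exact h'
              have hxo' : lt₁ x o := by
                rcases hxo with h' | rfl
                · exact h'
                · exact absurd (C.glue _ _ hg).1 hOx
              exact PGraph.nestI hP₁ hU₁ hAd₁ hxo' hoa hx' (C.glue _ _ hg).1
          · exact absurd h (C.ne₁₂ hOx b₁)
          · exact h
        have hhigh : lt (C.j₁ x) (C.j₂ b₂) := by
          rcases tri (C.j₁ x) (C.j₂ b₂) with h | h | h
          · exact h
          · exact absurd h (C.ne₁₂ hOx b₂)
          · exfalso
            by_cases hIb₂ : G₂.InputEdge b₂
            · obtain ⟨o₂, hOo₂, hg₂⟩ := C.glueIn b₂ hIb₂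
              rw [← hg₂] at h h2
              exact PGraph.nestI hP₁ hU₁ hAd₁ ((hc1 _ _).2 h2) ((hc1 _ _).2 h) hx'.symm hOo₂
            · obtain ⟨o, i, hg, hao, hib⟩ := (cross hOa hIb₂).1 h2
              have hno := crossR hOx hIb₂ h
              have hle : ¬ G₁.le lt₁ x o := fun hle => hno ⟨o, i, hg, hle, hib⟩
              have hox : lt₁ o x := by
                rcases tri₁ x o with h' | h' | h'
                · exact absurd (Or.inl h') hle
                · exact absurd (Or.inr h') hle
                · exact h'
              have hao' : lt₁ a o := by
                rcases hao with h' | rfl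
                · exact h'
                · exact absurd (C.glue _ _ hg).1 hOa
              exact PGraph.nestI hP₁ hU₁ hAd₁ hao' hox hx'.symm (C.glue _ _ hg).1
        exact ⟨C.j₂ b₁, ⟨b₁, rfl, rfl⟩, C.j₂ b₂, ⟨b₂, htt₂.symm, rfl⟩,
          Or.inl hlow, Or.inl hhigh⟩
  -- PART II : sources
  · intro hss
    have hm₁ : e₁ ∈ G.O (G.s e₁) := rfl
    have hm₂ : e₂ ∈ G.O (G.s e₁) := hss.symm
    rcases C.coverV (G.s e₁) with ⟨v, hv, hkv⟩ | ⟨w, hw, hkw⟩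
    · -- s e₁ = k₁ v
      rw [← hkv, C.O_k₁ hP₁ hA₁ hv] at hm₁ hm₂
      obtain ⟨c₁, hc₁, he₁⟩ := hm₁
      obtain ⟨c₂, hc₂v, he₂⟩ := hm₂
      have hsc₁ : G₁.s c₁ = v := hc₁
      have hsc₂ : G₁.s c₂ = v := hc₂v
      have hss₁ : G₁.s c₁ = G₁.s c₂ := hsc₁.trans hsc₂.symm
      subst he₁; subst he₂
      have hvσ : v ∉ G₁.σ := by
        intro h
        have : c₁ = c₂ := PGraph.uniq_s hP₁ h hsc₁ hsc₂
        subst this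
        exact irr _ (trn h1 h2)
      rcases C.cases₂ e with ⟨a, ha⟩ | ⟨b, hIb, hb⟩
      · -- e in the range of j₁ : transport (Q₂) of G₁
        subst ha
        have hsub := (hQ2₁ c₁ a c₂ ((hc1 _ _).2 h1) ((hc1 _ _).2 h2)).2.1 hss₁
        rw [C.src₁ a, C.O_k₁ hP₁ hA₁ (PGraph.src_not_output hP₁ hA₁ a),
          C.src₁ c₁, C.O_k₁ hP₁ hA₁ (PGraph.src_not_output hP₁ hA₁ c₁)]
        exact subset_trans (Set.image_mono hsub) (PGraph.conv_image hc1 _)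
      · -- e = j₂ b pure : betweenness
        subst hb
        rw [C.src₂ b hIb, C.O_k₂ hP₁ hA₁ (fun h => hIb h.1),
          C.src₁ c₁, C.O_k₁ hP₁ hA₁ (PGraph.src_not_output hP₁ hA₁ c₁)]
        rintro - ⟨y, hy, rfl⟩
        have hy' : G₂.s y = G₂.s b := hy
        have hIy : ¬ G₂.InputEdge y := fun h => hIb (PGraph.in_congr hy' h)
        have hlow : lt (C.j₁ c₁) (C.j₂ y) := by
          rcases tri (C.j₁ c₁) (C.j₂ y) with h | h | h
          · exact h
          · exact absurd h.symm (C.ne₂₁ hIy c₁)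
          · exfalso
            by_cases hOc₁ : G₁.OutputEdge c₁
            · obtain ⟨i₁, hIi₁, hg₁⟩ := C.glueOut c₁ hOc₁
              rw [hg₁] at h h1
              exact PGraph.nestO hP₂ hU₂ hAd₂ ((hc2 _ _).2 h) ((hc2 _ _).2 h1) hy' hIi₁
            · obtain ⟨o, i, hg, hco, hib⟩ := (cross hOc₁ hIb).1 h1
              have hno := crossR hOc₁ hIy h
              have hle : ¬ G₂.le lt₂ i y := fun hle => hno ⟨o, i, hg, hco, hle⟩
              have hyi : lt₂ y i := by
                rcases tri₂ i y with h' | h' | h'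
                · exact absurd (Or.inl h') hle
                · exact absurd (Or.inr h') hle
                · exact h'
              have hib' : lt₂ i b := by
                rcases hib with h' | rfl
                · exact h'
                · exact absurd (C.glue _ _ hg).2 hIb
              exact PGraph.nestO hP₂ hU₂ hAd₂ hyi hib' hy' (C.glue _ _ hg).2
        have hhigh : lt (C.j₂ y) (C.j₁ c₂) := by
          rcases tri (C.j₂ y) (C.j₁ c₂) with h | h | h
          · exact h
          · exact absurd h (C.ne₂₁ hIy c₂)
          · exfalso
            by_cases hOc₂ : G₁.OutputEdge c₂
            · obtain ⟨i₂, hIi₂, hg₂⟩ := C.glueOut c₂ hOc₂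
              rw [hg₂] at h h2
              exact PGraph.nestO hP₂ hU₂ hAd₂ ((hc2 _ _).2 h2) ((hc2 _ _).2 h) hy'.symm hIi₂
            · obtain ⟨o, i, hg, hco, hiy⟩ := (cross hOc₂ hIy).1 h
              have hno := crossR hOc₂ hIb h2
              have hle : ¬ G₂.le lt₂ i b := fun hle => hno ⟨o, i, hg, hco, hle⟩
              have hbi : lt₂ b i := by
                rcases tri₂ i b with h' | h' | h'
                · exact absurd (Or.inl h') hle
                · exact absurd (Or.inr h') hle
                · exact h'
              have hiy' : lt₂ i y := by
                rcases hiy with h' | rfl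
                · exact h'
                · exact absurd (C.glue _ _ hg).2 hIy
              exact PGraph.nestO hP₂ hU₂ hAd₂ hbi hiy' hy'.symm (C.glue _ _ hg).2
        exact ⟨C.j₁ c₁, ⟨c₁, rfl, rfl⟩, C.j₁ c₂, ⟨c₂, hss₁.symm, rfl⟩,
          Or.inl hlow, Or.inl hhigh⟩
    · -- s e₁ = k₂ w
      rw [← hkw, C.O_k₂ hP₁ hA₁ hw] at hm₁ hm₂
      obtain ⟨d₁, hd₁, he₁⟩ := hm₁
      obtain ⟨d₂, hd₂, he₂⟩ := hm₂
      have hsd₁ : G₂.s d₁ = w := hd₁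
      have hsd₂ : G₂.s d₂ = w := hd₂
      have hss₂ : G₂.s d₁ = G₂.s d₂ := hsd₁.trans hsd₂.symm
      have hwσ : w ∉ G₂.σ := fun h => hw ⟨h, d₁, hsd₁⟩
      have hId₁ : ¬ G₂.InputEdge d₁ := fun h => hwσ (hsd₁ ▸ h)
      have hId₂ : ¬ G₂.InputEdge d₂ := fun h => hwσ (hsd₂ ▸ h)
      subst he₁; subst he₂
      rcases C.cases₁ e with ⟨b, hb⟩ | ⟨a, hOa, ha⟩
      · subst hb
        by_cases hIb : G₂.InputEdge b
        · exact absurd ((hc2 _ _).2 h1)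
            (fun hl => PGraph.nestO hP₂ hU₂ hAd₂ hl ((hc2 _ _).2 h2) hss₂ hIb)
        · -- transport (Q₂) of G₂
          have hsub := (hQ2₂ d₁ b d₂ ((hc2 _ _).2 h1) ((hc2 _ _).2 h2)).2.1 hss₂
          rw [C.src₂ b hIb, C.O_k₂ hP₁ hA₁ (fun h => hIb h.1),
            C.src₂ d₁ hId₁, C.O_k₂ hP₁ hA₁ (fun h => hId₁ h.1)]
          exact subset_trans (Set.image_mono hsub) (PGraph.conv_image hc2 _)
      · -- e = j₁ a pure : impossible
        exfalso
        subst ha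
        obtain ⟨o, i, hg, hao, hid⟩ := (cross hOa hId₂).1 h2
        have hno := crossR hOa hId₁ h1
        have hle : ¬ G₂.le lt₂ i d₁ := fun hle => hno ⟨o, i, hg, hao, hle⟩
        have hd₁i : lt₂ d₁ i := by
          rcases tri₂ i d₁ with h' | h' | h'
          · exact absurd (Or.inl h') hle
          · exact absurd (Or.inr h') hle
          · exact h'
        have hid' : lt₂ i d₂ := by
          rcases hid with h' | rfl
          · exact h'
          · exact absurd (C.glue _ _ hg).2 hId₂
        exact PGraph.nestO hP₂ hU₂ hAd₂ hd₁i hid' hss₂ (C.glue _ _ hg).2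
  -- PART III : target of e₁ = source of e₂
  · intro hts
    have hm₁ : e₁ ∈ G.I (G.t e₁) := rfl
    have hm₂ : e₂ ∈ G.O (G.t e₁) := hts.symm
    rcases C.coverV (G.t e₁) with ⟨v, hv, hkv⟩ | ⟨w, hw, hkw⟩
    · -- vertex = k₁ v
      rw [← hkv, C.I_k₁ hP₂ hA₂ hv] at hm₁
      rw [← hkv, C.O_k₁ hP₁ hA₁ hv] at hm₂
      obtain ⟨a₁, ha₁, he₁⟩ := hm₁
      obtain ⟨c₂, hc₂v, he₂⟩ := hm₂
      have ha₁' : G₁.t a₁ = v := ha₁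
      have hsc₂ : G₁.s c₂ = v := hc₂v
      have hts₁ : G₁.t a₁ = G₁.s c₂ := ha₁'.trans hsc₂.symm
      have hvσ : v ∉ G₁.σ := fun h => hv ⟨h, a₁, ha₁'⟩
      have hOa₁ : ¬ G₁.OutputEdge a₁ := fun h => hvσ (ha₁' ▸ h)
      subst he₁; subst he₂
      rcases C.cases₂ e with ⟨a, ha⟩ | ⟨b, hIb, hb⟩
      · -- e = j₁ a
        subst ha
        rcases (hQ2₁ a₁ a c₂ ((hc1 _ _).2 h1) ((hc1 _ _).2 h2)).2.2 hts₁ with hL | hR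
        · by_cases hOa : G₁.OutputEdge a
          · exact absurd (show a ∈ G₁.conv lt₁ (G₁.I v) from ha₁' ▸ hL rfl)
              ((hAd₁ v hvσ).2 a hOa)
          · refine Or.inl ?_
            rw [C.tgt₁ a hOa, C.I_k₁ hP₂ hA₂ (fun h => hOa h.1),
              C.tgt₁ a₁ hOa₁, C.I_k₁ hP₂ hA₂ (fun h => hOa₁ h.1)]
            exact subset_trans (Set.image_mono hL) (PGraph.conv_image hc1 _)
        · refine Or.inr ?_
          rw [C.src₁ a, C.O_k₁ hP₁ hA₁ (PGraph.src_not_output hP₁ hA₁ a),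
            C.src₁ c₂, C.O_k₁ hP₁ hA₁ (PGraph.src_not_output hP₁ hA₁ c₂)]
          exact subset_trans (Set.image_mono hR) (PGraph.conv_image hc1 _)
      · -- e = j₂ b pure : prove the O-inclusion
        subst hb
        refine Or.inr ?_
        rw [C.src₂ b hIb, C.O_k₂ hP₁ hA₁ (fun h => hIb h.1),
          C.src₁ c₂, C.O_k₁ hP₁ hA₁ (PGraph.src_not_output hP₁ hA₁ c₂)]
        obtain ⟨o, i, hg, hao, hib⟩ := (cross hOa₁ hIb).1 h1
        have hOo : G₁.OutputEdge o := (C.glue _ _ hg).1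
        have hIi : G₂.InputEdge i := (C.glue _ _ hg).2
        have ha₁o : lt₁ a₁ o := by
          rcases hao with h' | rfl
          · exact h'
          · exact absurd hOo hOa₁
        have hib' : lt₂ i b := by
          rcases hib with h' | rfl
          · exact h'
          · exact absurd hIi hIb
        rintro - ⟨y, hy, rfl⟩
        have hy' : G₂.s y = G₂.s b := hy
        have hIy : ¬ G₂.InputEdge y := fun h => hIb (PGraph.in_congr hy' h)
        have hiy : lt₂ i y := by
          rcases tri₂ i y with h' | h' | h'
          · exact h'
          · exact absurd (h' ▸ hIi) hIy
          · exact absurd hIi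
              (fun hIi => PGraph.nestO hP₂ hU₂ hAd₂ h' hib' hy' hIi)
        by_cases hOc₂ : G₁.OutputEdge c₂
        · -- e₂ glued
          obtain ⟨i₂, hIi₂, hg₂⟩ := C.glueOut c₂ hOc₂
          have hbi₂ : lt₂ b i₂ := (hc2 _ _).2 (by rw [← hg₂]; exact h2)
          have hyi₂ : lt₂ y i₂ := by
            rcases tri₂ y i₂ with h' | h' | h'
            · exact h'
            · exact absurd (h' ▸ hIi₂) hIy
            · exact absurd hIi₂
                (fun hIi₂ => PGraph.nestO hP₂ hU₂ hAd₂ hbi₂ h' hy'.symm hIi₂)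
          have hoc₂ : lt₁ o c₂ := (hc1 _ _).2
            (by rw [hg, hg₂]; exact trn ((hc2 _ _).1 hib') ((hc2 _ _).1 hbi₂))
          rcases (hQ2₁ a₁ o c₂ ha₁o hoc₂).2.2 hts₁ with hL | hR
          · exact absurd (show o ∈ G₁.conv lt₁ (G₁.I v) from ha₁' ▸ hL rfl)
              ((hAd₁ v hvσ).2 o hOo)
          · obtain ⟨c, hc, c', hc', hco, -⟩ := hR rfl
            refine ⟨C.j₁ c, ⟨c, hc, rfl⟩, C.j₁ c₂, ⟨c₂, rfl, rfl⟩, Or.inl ?_, Or.inl ?_⟩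
            · rcases hco with h' | rfl
              · exact trn ((hc1 _ _).1 h') (by rw [hg]; exact (hc2 _ _).1 hiy)
              · rw [hg]; exact (hc2 _ _).1 hiy
            · rw [hg₂]; exact (hc2 _ _).1 hyi₂
        · -- e₂ pure
          have hno := crossR hOc₂ hIb h2
          have hle : ¬ G₁.le lt₁ c₂ o := fun hle => hno ⟨o, i, hg, hle, hib⟩
          have hoc₂ : lt₁ o c₂ := by
            rcases tri₁ o c₂ with h' | h' | h'
            · exact h'
            · exact absurd (Or.inr h'.symm) hle
            · exact absurd (Or.inl h') hle
          have hyc₂ : lt (C.j₂ y) (C.j₁ c₂) := by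
            rcases tri (C.j₂ y) (C.j₁ c₂) with h' | h' | h'
            · exact h'
            · exact absurd h' (C.ne₂₁ hIy c₂)
            · exfalso
              obtain ⟨o', i', hg', hc₂o', hi'y⟩ := (cross hOc₂ hIy).1 h'
              have hle' : ¬ G₂.le lt₂ i' b :=
                fun hle' => asym h2 ((cross hOc₂ hIb).2 ⟨o', i', hg', hc₂o', hle'⟩)
              have hbi' : lt₂ b i' := by
                rcases tri₂ i' b with h'' | h'' | h''
                · exact absurd (Or.inl h'') hle'
                · exact absurd (Or.inr h'') hle'
                · exact h''
              have hi'y' : lt₂ i' y := by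
                rcases hi'y with h'' | rfl
                · exact h''
                · exact absurd (C.glue _ _ hg').2 hIy
              exact PGraph.nestO hP₂ hU₂ hAd₂ hbi' hi'y' hy'.symm (C.glue _ _ hg').2
          rcases (hQ2₁ a₁ o c₂ ha₁o hoc₂).2.2 hts₁ with hL | hR
          · exact absurd (show o ∈ G₁.conv lt₁ (G₁.I v) from ha₁' ▸ hL rfl)
              ((hAd₁ v hvσ).2 o hOo)
          · obtain ⟨c, hc, c', hc', hco, -⟩ := hR rfl
            refine ⟨C.j₁ c, ⟨c, hc, rfl⟩, C.j₁ c₂, ⟨c₂, rfl, rfl⟩, Or.inl ?_, Or.inl hyc₂⟩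
            rcases hco with h' | rfl
            · exact trn ((hc1 _ _).1 h') (by rw [hg]; exact (hc2 _ _).1 hiy)
            · rw [hg]; exact (hc2 _ _).1 hiy
    · -- vertex = k₂ w
      rw [← hkw, C.I_k₂ hP₂ hA₂ hw] at hm₁
      rw [← hkw, C.O_k₂ hP₁ hA₁ hw] at hm₂
      obtain ⟨b₁, hb₁, he₁⟩ := hm₁
      obtain ⟨d₂, hd₂, he₂⟩ := hm₂
      have hb₁' : G₂.t b₁ = w := hb₁
      have hsd₂ : G₂.s d₂ = w := hd₂
      have hts₂ : G₂.t b₁ = G₂.s d₂ := hb₁'.trans hsd₂.symm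
      have hwσ : w ∉ G₂.σ := fun h => hw ⟨h, d₂, hsd₂⟩
      have hId₂ : ¬ G₂.InputEdge d₂ := fun h => hwσ (hsd₂ ▸ h)
      subst he₁; subst he₂
      rcases C.cases₁ e with ⟨b, hb⟩ | ⟨a, hOa, ha⟩
      · -- e = j₂ b
        subst hb
        rcases (hQ2₂ b₁ b d₂ ((hc2 _ _).2 h1) ((hc2 _ _).2 h2)).2.2 hts₂ with hL | hR
        · refine Or.inl ?_
          rw [C.tgt₂ b, C.I_k₂ hP₂ hA₂ (PGraph.tgt_not_input hP₂ hA₂ b),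
            C.tgt₂ b₁, C.I_k₂ hP₂ hA₂ (PGraph.tgt_not_input hP₂ hA₂ b₁)]
          exact subset_trans (Set.image_mono hL) (PGraph.conv_image hc2 _)
        · by_cases hIb : G₂.InputEdge b
          · exact absurd (show b ∈ G₂.conv lt₂ (G₂.O w) from hsd₂ ▸ hR rfl)
              ((hAd₂ w hwσ).1 b hIb)
          · refine Or.inr ?_
            rw [C.src₂ b hIb, C.O_k₂ hP₁ hA₁ (fun h => hIb h.1),
              C.src₂ d₂ hId₂, C.O_k₂ hP₁ hA₁ (fun h => hId₂ h.1)]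
            exact subset_trans (Set.image_mono hR) (PGraph.conv_image hc2 _)
      · -- e = j₁ a pure : prove the I-inclusion
        subst ha
        refine Or.inl ?_
        rw [C.tgt₁ a hOa, C.I_k₁ hP₂ hA₂ (fun h => hOa h.1),
          C.tgt₂ b₁, C.I_k₂ hP₂ hA₂ (PGraph.tgt_not_input hP₂ hA₂ b₁)]
        obtain ⟨o, i, hg, hao, hid⟩ := (cross hOa hId₂).1 h2
        have hOo : G₁.OutputEdge o := (C.glue _ _ hg).1
        have hIi : G₂.InputEdge i := (C.glue _ _ hg).2
        have hao' : lt₁ a o := by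
          rcases hao with h' | rfl
          · exact h'
          · exact absurd hOo hOa
        have hid' : lt₂ i d₂ := by
          rcases hid with h' | rfl
          · exact h'
          · exact absurd hIi hId₂
        have hb₁i : lt₂ b₁ i := by
          by_cases hIb₁ : G₂.InputEdge b₁
          · obtain ⟨o₁, hOo₁, hg₁⟩ := C.glueIn b₁ hIb₁
            have ho₁a : lt₁ o₁ a := (hc1 _ _).2 (by rw [hg₁]; exact h1)
            exact (hc2 _ _).2 (by rw [← hg₁, ← hg]; exact (hc1 _ _).1 (trn₁ ho₁a hao'))
          · have hno := crossR hOa hIb₁ h1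
            have hle : ¬ G₂.le lt₂ i b₁ := fun hle => hno ⟨o, i, hg, hao, hle⟩
            rcases tri₂ i b₁ with h' | h' | h'
            · exact absurd (Or.inl h') hle
            · exact absurd (Or.inr h') hle
            · exact h'
        rcases (hQ2₂ b₁ i d₂ hb₁i hid').2.2 hts₂ with hL | hR
        · obtain ⟨b', hb', b'', hb'', -, hib''⟩ := hL rfl
          rintro - ⟨x, hx, rfl⟩
          have hx' : G₁.t x = G₁.t a := hx
          have hOx : ¬ G₁.OutputEdge x := fun h => hOa (PGraph.out_congr hx' h)
          have hxo : lt₁ x o := by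
            rcases tri₁ x o with h' | h' | h'
            · exact h'
            · exact absurd (h' ▸ hOo) hOx
            · exact absurd hOo
                (fun hOo => PGraph.nestI hP₁ hU₁ hAd₁ hao' h' hx'.symm hOo)
          have hlow : lt (C.j₂ b₁) (C.j₁ x) := by
            by_cases hIb₁ : G₂.InputEdge b₁
            · obtain ⟨o₁, hOo₁, hg₁⟩ := C.glueIn b₁ hIb₁
              have ho₁a : lt₁ o₁ a := (hc1 _ _).2 (by rw [hg₁]; exact h1)
              have ho₁x : lt₁ o₁ x := by
                rcases tri₁ o₁ x with h' | h' | h'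
                · exact h'
                · exact absurd (h' ▸ hOo₁) hOx
                · exact absurd hOo₁
                    (fun hOo₁ => PGraph.nestI hP₁ hU₁ hAd₁ h' ho₁a hx' hOo₁)
              rw [← hg₁]; exact (hc1 _ _).1 ho₁x
            · rcases tri (C.j₂ b₁) (C.j₁ x) with h' | h' | h'
              · exact h'
              · exact absurd h'.symm (C.ne₁₂ hOx b₁)
              · exfalso
                obtain ⟨o', i', hg', hxo', hi'b₁⟩ := (cross hOx hIb₁).1 h'
                have hno := crossR hOa hIb₁ h1
                have hle : ¬ G₁.le lt₁ a o' := fun hle => hno ⟨o', i', hg', hle, hi'b₁⟩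
                have ho'a : lt₁ o' a := by
                  rcases tri₁ a o' with h'' | h'' | h''
                  · exact absurd (Or.inl h'') hle
                  · exact absurd (Or.inr h'') hle
                  · exact h''
                have hxo'' : lt₁ x o' := by
                  rcases hxo' with h'' | rfl
                  · exact h''
                  · exact absurd (C.glue _ _ hg').1 hOx
                exact PGraph.nestI hP₁ hU₁ hAd₁ hxo'' ho'a hx' (C.glue _ _ hg').1
          refine ⟨C.j₂ b₁, ⟨b₁, rfl, rfl⟩, C.j₂ b'', ⟨b'', hb'', rfl⟩,
            Or.inl hlow, Or.inl ?_⟩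
          rcases hib'' with h' | rfl
          · exact trn ((hc1 _ _).1 hxo) (by rw [hg]; exact (hc2 _ _).1 h')
          · rw [← hg]; exact (hc1 _ _).1 hxo
        · exact absurd (show i ∈ G₂.conv lt₂ (G₂.O w) from hsd₂ ▸ hR rfl)
            ((hAd₂ w hwσ).1 i hIi)
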